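/- Let F be the standard Laplace cumulative distribution function, F(x) = 1/2 + (1/2) sgn(x) (1 − e^{−|x|}). Then for every threshold τ ≤ 0 and observation y ∈ ℝ, writing v = max(y, τ): twCRPS_τ(F, y) = |v| − 3/4 + e^{−|v|} − (1/8) e^{2τ}. -/

import Mathlib

open MeasureTheory Set

/-- Threshold-weighted CRPS: `twCRPS_τ(F, y) = ∫_τ^∞ (F(z) − 𝟙{z ≥ y})² dz`. -/
noncomputable def twCRPS (F : ℝ → ℝ) (τ y : ℝ) : ℝ :=
  ∫ z in Set.Ioi τ, (F z - if y ≤ z then (1 : ℝ) else 0) ^ 2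

/-- Standard Laplace CDF `F(x) = 1/2 + (1/2) sgn(x) (1 − e^{−|x|})`. -/
noncomputable def laplaceCDF (x : ℝ) : ℝ :=
  1 / 2 + 1 / 2 * Real.sign x * (1 - Real.exp (-|x|))

/-!
Splitting the integral at `v = max y τ`, the twCRPS is `∫_τ^v F² + ∫_v^∞ (1 - F)²`.
The square of the Laplace CDF has the explicit primitive `Φ = laplaceCDFSqPrimitive`, and the
symmetry `F (-z) = 1 - F z` turns the tail integral into `∫_{-∞}^{-v} F² = Φ (-v)`. Hence the
score is `Φ v + Φ (-v) - Φ τ`, where `Φ v + Φ (-v) = |v| + e^{-|v|} - 3/4` and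
`Φ τ = e^{2τ}/8` because `τ ≤ 0`.
-/

open Filter Topology Real

theorem twCRPS_eq_integral_Ioc_add_integral_Ioi (F : ℝ → ℝ) (τ y : ℝ)
    (hF : IntegrableOn (fun z ↦ F z ^ 2) (Ioc τ (max y τ)))
    (hF_compl : IntegrableOn (fun z ↦ (1 - F z) ^ 2) (Ioi (max y τ))) :
    twCRPS F τ y =
      (∫ z in Ioc τ (max y τ), F z ^ 2) + ∫ z in Ioi (max y τ), (1 - F z) ^ 2 := by
  set v := max y τ
  have h_below : EqOn (fun z ↦ (F z - if y ≤ z then (1 : ℝ) else 0) ^ 2)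
      (fun z ↦ F z ^ 2) (Ioo τ v) := by
    intro z ⟨hτz, hzv⟩
    have : z < y := (lt_max_iff.1 hzv).resolve_right hτz.not_gt
    simp [this.not_ge]
  have h_above : EqOn (fun z ↦ (F z - if y ≤ z then (1 : ℝ) else 0) ^ 2)
      (fun z ↦ (1 - F z) ^ 2) (Ioi v) := by
    intro z hz
    have : y ≤ z := (le_max_left y τ).trans (le_of_lt hz)
    simp only [this, if_true]
    ring
  have h_int_below : IntegrableOn (fun z ↦ (F z - if y ≤ z then (1 : ℝ) else 0) ^ 2)
      (Ioc τ v) :=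
    (integrableOn_Ioc_iff_integrableOn_Ioo).2 <|
      ((integrableOn_Ioc_iff_integrableOn_Ioo).1 hF).congr_fun h_below.symm measurableSet_Ioo
  unfold twCRPS
  rw [← Ioc_union_Ioi_eq_Ioi (le_max_right y τ), setIntegral_union Ioc_disjoint_Ioi_same
    measurableSet_Ioi h_int_below (hF_compl.congr_fun h_above.symm measurableSet_Ioi),
    integral_Ioc_eq_integral_Ioo, integral_Ioc_eq_integral_Ioo,
    setIntegral_congr_fun measurableSet_Ioo h_below,
    setIntegral_congr_fun measurableSet_Ioi h_above]

theorem hasDerivAt_ite_le {f g f' g' : ℝ → ℝ} {a : ℝ} (hf : ∀ x, HasDerivAt f (f' x) x)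
    (hg : ∀ x, HasDerivAt g (g' x) x) (ha : f a = g a) (ha' : f' a = g' a) (x : ℝ) :
    HasDerivAt (fun x ↦ if x ≤ a then f x else g x) (if x ≤ a then f' x else g' x) x := by
  rcases lt_trichotomy x a with hx | rfl | hx
  · rw [if_pos hx.le]
    refine (hf x).congr_of_eventuallyEq ?_
    filter_upwards [Iio_mem_nhds hx] with z hz using if_pos (le_of_lt hz)
  · have h_left : HasDerivWithinAt (fun z ↦ if z ≤ x then f z else g z) (f' x) (Iic x) x :=
      (hf x).hasDerivWithinAt.congr (fun z hz ↦ if_pos hz) (if_pos le_rfl)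
    have h_eq_right : EqOn (fun z ↦ if z ≤ x then f z else g z) g (Ici x) := by
      intro z hz
      rcases (mem_Ici.1 hz).eq_or_lt with rfl | hz
      · simp [ha]
      · exact if_neg (not_le.2 hz)
    have h_right : HasDerivWithinAt (fun z ↦ if z ≤ x then f z else g z) (f' x) (Ici x) x :=
      ha' ▸ (hg x).hasDerivWithinAt.congr h_eq_right (h_eq_right self_mem_Ici)
    rw [if_pos le_rfl, ← hasDerivWithinAt_univ, ← Iic_union_Ici]
    exact h_left.union h_right
  · rw [if_neg hx.not_ge]
    refine (hg x).congr_of_eventuallyEq ?_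
    filter_upwards [Ioi_mem_nhds hx] with z hz using if_neg (not_le.2 hz)

theorem laplaceCDF_of_nonpos {x : ℝ} (hx : x ≤ 0) : laplaceCDF x = exp x / 2 := by
  rcases hx.lt_or_eq with hx | rfl
  · rw [laplaceCDF, Real.sign_of_neg hx, abs_of_neg hx, neg_neg]; ring
  · simp [laplaceCDF]

theorem laplaceCDF_of_nonneg {x : ℝ} (hx : 0 ≤ x) : laplaceCDF x = 1 - exp (-x) / 2 := by
  rcases hx.lt_or_eq with hx | rfl
  · rw [laplaceCDF, Real.sign_of_pos hx, abs_of_pos hx]; ring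
  · simp [laplaceCDF]; norm_num

theorem laplaceCDF_neg (x : ℝ) : laplaceCDF (-x) = 1 - laplaceCDF x := by
  rw [laplaceCDF, laplaceCDF, Real.sign_neg, abs_neg]
  ring

theorem laplaceCDF_eq_ite :
    laplaceCDF = fun x ↦ if x ≤ 0 then exp x / 2 else 1 - exp (-x) / 2 := by
  ext x
  split_ifs with hx
  · exact laplaceCDF_of_nonpos hx
  · exact laplaceCDF_of_nonneg (not_le.1 hx).le

theorem continuous_laplaceCDF : Continuous laplaceCDF := by
  rw [laplaceCDF_eq_ite]
  exact Continuous.if_le (by fun_prop) (by fun_prop) continuous_id continuous_const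
    (fun x hx ↦ by simp [hx]; norm_num)

noncomputable def laplaceCDFSqPrimitive (x : ℝ) : ℝ :=
  if x ≤ 0 then exp x ^ 2 / 8 else x + exp (-x) - exp (-x) ^ 2 / 8 - 3 / 4

theorem laplaceCDFSqPrimitive_of_nonpos {x : ℝ} (hx : x ≤ 0) :
    laplaceCDFSqPrimitive x = exp x ^ 2 / 8 :=
  if_pos hx

theorem laplaceCDFSqPrimitive_of_pos {x : ℝ} (hx : 0 < x) :
    laplaceCDFSqPrimitive x = x + exp (-x) - exp (-x) ^ 2 / 8 - 3 / 4 :=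
  if_neg hx.not_ge

theorem laplaceCDFSqPrimitive_add_neg (x : ℝ) :
    laplaceCDFSqPrimitive x + laplaceCDFSqPrimitive (-x) = |x| + exp (-|x|) - 3 / 4 := by
  rcases lt_trichotomy x 0 with hx | rfl | hx
  · rw [laplaceCDFSqPrimitive_of_nonpos hx.le, laplaceCDFSqPrimitive_of_pos (neg_pos.2 hx),
      abs_of_neg hx, neg_neg]
    ring
  · simp [laplaceCDFSqPrimitive_of_nonpos]
    norm_num
  · rw [laplaceCDFSqPrimitive_of_pos hx, laplaceCDFSqPrimitive_of_nonpos (neg_nonpos.2 hx.le),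
      abs_of_pos hx]
    ring

theorem hasDerivAt_laplaceCDFSqPrimitive (x : ℝ) :
    HasDerivAt laplaceCDFSqPrimitive (laplaceCDF x ^ 2) x := by
  have h_left (x : ℝ) : HasDerivAt (fun x ↦ exp x ^ 2 / 8) (exp x ^ 2 / 4) x :=
    (((hasDerivAt_exp x).fun_pow 2).div_const 8).congr_deriv (by ring)
  have h_right (x : ℝ) : HasDerivAt (fun x ↦ x + exp (-x) - exp (-x) ^ 2 / 8 - 3 / 4)
      (1 - exp (-x) + exp (-x) ^ 2 / 4) x := by
    have h_exp_neg := (hasDerivAt_neg x).exp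
    exact (((hasDerivAt_id x).add h_exp_neg).sub ((h_exp_neg.fun_pow 2).div_const 8)).sub_const
      (3 / 4 : ℝ) |>.congr_deriv (by ring)
  refine (hasDerivAt_ite_le h_left h_right (a := 0) (by norm_num) (by norm_num) x).congr_deriv ?_
  split_ifs with hx
  · rw [laplaceCDF_of_nonpos hx]; ring
  · rw [laplaceCDF_of_nonneg (not_le.1 hx).le]; ring

theorem tendsto_laplaceCDFSqPrimitive_atBot : Tendsto laplaceCDFSqPrimitive atBot (𝓝 0) := by
  have h_lim : Tendsto (fun x ↦ exp x ^ 2 / 8) atBot (𝓝 0) := by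
    simpa using (tendsto_exp_atBot.pow 2).div_const 8
  refine h_lim.congr' ?_
  filter_upwards [eventually_le_atBot 0] with x hx using (laplaceCDFSqPrimitive_of_nonpos hx).symm

theorem hasDerivAt_neg_laplaceCDFSqPrimitive_neg (x : ℝ) :
    HasDerivAt (fun w ↦ -laplaceCDFSqPrimitive (-w)) ((1 - laplaceCDF x) ^ 2) x := by
  have := ((hasDerivAt_laplaceCDFSqPrimitive (-x)).comp x (hasDerivAt_neg x)).neg
  rw [laplaceCDF_neg] at this
  exact this.congr_deriv (by ring)

theorem tendsto_neg_laplaceCDFSqPrimitive_neg_atTop :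
    Tendsto (fun w ↦ -laplaceCDFSqPrimitive (-w)) atTop (𝓝 0) := by
  simpa using (tendsto_laplaceCDFSqPrimitive_atBot.comp tendsto_neg_atTop_atBot).neg

theorem integrableOn_Ioi_one_sub_laplaceCDF_sq (a : ℝ) :
    IntegrableOn (fun z ↦ (1 - laplaceCDF z) ^ 2) (Ioi a) :=
  integrableOn_Ioi_deriv_of_nonneg' (fun x _ ↦ hasDerivAt_neg_laplaceCDFSqPrimitive_neg x)
    (fun _ _ ↦ sq_nonneg _) tendsto_neg_laplaceCDFSqPrimitive_neg_atTop

theorem integral_Ioi_one_sub_laplaceCDF_sq (a : ℝ) :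
    ∫ z in Ioi a, (1 - laplaceCDF z) ^ 2 = laplaceCDFSqPrimitive (-a) := by
  rw [integral_Ioi_of_hasDerivAt_of_nonneg' (fun x _ ↦ hasDerivAt_neg_laplaceCDFSqPrimitive_neg x)
    (fun _ _ ↦ sq_nonneg _) tendsto_neg_laplaceCDFSqPrimitive_neg_atTop, zero_sub, neg_neg]

theorem twCRPS_laplace_neg_threshold (τ y : ℝ) (hτ : τ ≤ 0) :
    twCRPS laplaceCDF τ y =
      |max y τ| - 3 / 4 + Real.exp (-|max y τ|) - 1 / 8 * Real.exp (2 * τ) := by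
  set v := max y τ
  have h_sq_cont : Continuous fun z ↦ laplaceCDF z ^ 2 := continuous_laplaceCDF.pow 2
  have h_sq_integral : ∫ z in Ioc τ v, laplaceCDF z ^ 2 =
      laplaceCDFSqPrimitive v - laplaceCDFSqPrimitive τ := by
    rw [← intervalIntegral.integral_of_le (le_max_right y τ)]
    exact intervalIntegral.integral_eq_sub_of_hasDerivAt
      (fun x _ ↦ hasDerivAt_laplaceCDFSqPrimitive x) (h_sq_cont.intervalIntegrable τ v)
  rw [twCRPS_eq_integral_Ioc_add_integral_Ioi _ _ _ h_sq_cont.integrableOn_Ioc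
    (integrableOn_Ioi_one_sub_laplaceCDF_sq v), h_sq_integral, integral_Ioi_one_sub_laplaceCDF_sq,
    laplaceCDFSqPrimitive_of_nonpos hτ, sq, ← exp_add, ← two_mul]
  linear_combination laplaceCDFSqPrimitive_add_neg v
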